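/- (Lemma 'Expected Coverage of Level-i'.) Let (Ω, F, P) be a probability space, G ≥ 0 a real constant, and C_0, C_1, C_2, ... nonnegative integrable real random variables such that all finite products C_0·C_1···C_{i−1} are integrable. Assume: (a) E[C_0] = G; (b) for every i ≥ 1, E[C_i] = G · E[C_0·C_1···C_{i−1}]; and (c) for every i ≥ 2, E[C_0·C_1···C_{i−1}] ≥ E[C_0·C_1···C_{i−2}] · E[C_{i−1}] (nonnegative correlation of C_{i−1} with the product of the earlier coverages). Then for every i ≥ 0, E[C_i] ≥ G^(2^i). -/
import Mathlib


open MeasureTheory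

/-- Expected Coverage of Level-i: On a probability space, let `G ≥ 0`
and let `C_0, C_1, …` be nonnegative integrable random variables whose finite products
are integrable. Assume (a) `E[C_0] = G`; (b) for every `i ≥ 1`,
`E[C_i] = G · E[C_0 ⋯ C_{i−1}]`; and (c) for every `i ≥ 2`,
`E[C_0 ⋯ C_{i−1}] ≥ E[C_0 ⋯ C_{i−2}] · E[C_{i−1}]`. Then `E[C_i] ≥ G^(2^i)` for all `i`. -/
theorem expected_coverage_level_i
    {Ω : Type*} [MeasurableSpace Ω] (P : Measure Ω) [IsProbabilityMeasure P]
    (G : ℝ) (hG : 0 ≤ G) (C : ℕ → Ω → ℝ)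
    (hnonneg : ∀ i ω, 0 ≤ C i ω)
    (hint : ∀ i, Integrable (C i) P)
    (hprodint : ∀ n, Integrable (fun ω => ∏ i ∈ Finset.range n, C i ω) P)
    (hbase : ∫ ω, C 0 ω ∂P = G)
    (hrec : ∀ i : ℕ, 1 ≤ i →
      ∫ ω, C i ω ∂P = G * ∫ ω, ∏ j ∈ Finset.range i, C j ω ∂P)
    (hcorr : ∀ i : ℕ, 2 ≤ i →
      (∫ ω, ∏ j ∈ Finset.range (i - 1), C j ω ∂P) * ∫ ω, C (i - 1) ω ∂P
        ≤ ∫ ω, ∏ j ∈ Finset.range i, C j ω ∂P) :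
    ∀ i : ℕ, G ^ (2 ^ i) ≤ ∫ ω, C i ω ∂P := by
  have hPnn : ∀ n, 0 ≤ ∫ ω, ∏ j ∈ Finset.range n, C j ω ∂P := by
    intro n
    exact integral_nonneg fun ω => Finset.prod_nonneg fun j _ => hnonneg j ω
  have key : ∀ i : ℕ, 1 ≤ i → G ^ (2 ^ i - 1) ≤ ∫ ω, ∏ j ∈ Finset.range i, C j ω ∂P := by
    intro i hi
    induction i, hi using Nat.le_induction with
    | base =>
      simp only [pow_one, Finset.range_one, Finset.prod_singleton]
      rw [hbase]; norm_num
    | succ i hi ih =>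
      have hc := hcorr (i + 1) (by omega)
      simp only [Nat.add_sub_cancel] at hc
      have hCi : ∫ ω, C i ω ∂P = G * ∫ ω, ∏ j ∈ Finset.range i, C j ω ∂P := hrec i hi
      have hGp : (0:ℝ) ≤ G ^ (2 ^ i - 1) := pow_nonneg hG _
      have hmul : G ^ (2 ^ i - 1) * (G * G ^ (2 ^ i - 1)) ≤
          (∫ ω, ∏ j ∈ Finset.range i, C j ω ∂P) * ∫ ω, C i ω ∂P := by
        rw [hCi]
        exact mul_le_mul ih (mul_le_mul_of_nonneg_left ih hG)
          (mul_nonneg hG hGp) (hPnn i)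
      calc G ^ (2 ^ (i + 1) - 1)
          = G ^ (2 ^ i - 1) * (G * G ^ (2 ^ i - 1)) := by
            rw [← pow_succ']
            rw [← pow_add]
            congr 1
            have h1 : 1 ≤ 2 ^ i := Nat.one_le_two_pow
            have h2 : 2 ^ (i + 1) = 2 * 2 ^ i := by ring
            omega
        _ ≤ (∫ ω, ∏ j ∈ Finset.range i, C j ω ∂P) * ∫ ω, C i ω ∂P := hmul
        _ ≤ _ := hc
  intro i
  rcases Nat.eq_zero_or_pos i with h0 | hpos
  · subst h0
    simp [hbase]
  · rw [hrec i hpos]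
    have := key i hpos
    calc G ^ (2 ^ i) = G * G ^ (2 ^ i - 1) := by
          rw [← pow_succ']
          congr 1
          have h1 : 1 ≤ 2 ^ i := Nat.one_le_two_pow
          omega
      _ ≤ G * ∫ ω, ∏ j ∈ Finset.range i, C j ω ∂P := mul_le_mul_of_nonneg_left this hG
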